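/- For the Z-channel mutual information with crossover p_c(x₂) = ((x₂+c)/(A₁+x₂+c))^{nN} depending on interference level x₂ ≥ 0, the capacity-achieving value sup_α f_I(α, p_c(x₂)) is strictly decreasing in x₂; hence the maximum individual rate over x₂ ∈ {0, A₂} is attained at x₂ = 0. -/

import Mathlib

/-!
Writing `σ = 1/(1+e^x)`, the expression `H(σ) - x σ` collapses to the softplus value
`log (1 + e^{-x})`, which is strictly decreasing in `x`. So the capacity is strictly decreasing in
`p` as soon as `g(p) = H(p)/(1-p)` is strictly increasing on `(0,1)`, and indeed
`g'(p) = -log p / (1-p)^2 > 0`. Finally the crossover `((x+c)/(A₁+x+c))^{nN}` lies in `(0,1)` and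
increases with `x`.
-/

open Real Set

namespace Real

lemma neg_mul_log_sub_one_sub_mul_log (q : ℝ) :
    -q * log q - (1 - q) * log (1 - q) = binEntropy q := by
  simp only [binEntropy_eq_negMulLog_add_negMulLog_one_sub, negMulLog]
  ring

lemma binEntropy_one_div_one_add_exp_sub (x : ℝ) :
    binEntropy (1 / (1 + exp x)) - x / (1 + exp x) = log (1 + exp (-x)) := by
  have hs : 0 < 1 + exp x := by positivity
  have h_compl : 1 - 1 / (1 + exp x) = exp x / (1 + exp x) := by
    field_simp
    ring
  have h_softplus : 1 + exp (-x) = (1 + exp x) / exp x := by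
    rw [exp_neg]
    field_simp
    ring
  rw [← neg_mul_log_sub_one_sub_mul_log, h_compl, h_softplus, one_div, log_inv,
    log_div (exp_ne_zero x) hs.ne', log_div hs.ne' (exp_ne_zero x), log_exp]
  field_simp
  ring

lemma strictAnti_log_one_add_exp_neg : StrictAnti fun x : ℝ => log (1 + exp (-x)) :=
  fun _ _ hxy => log_lt_log (by positivity) (by gcongr)

lemma hasDerivAt_binEntropy_div_one_sub {p : ℝ} (hp₀ : p ≠ 0) (hp₁ : p ≠ 1) :
    HasDerivAt (fun p => binEntropy p / (1 - p)) (-log p / (1 - p) ^ 2) p := by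
  have h1p : 1 - p ≠ 0 := sub_ne_zero.2 hp₁.symm
  refine ((hasDerivAt_binEntropy hp₀ hp₁).div ((hasDerivAt_id' p).const_sub 1) h1p).congr_deriv ?_
  rw [← neg_mul_log_sub_one_sub_mul_log]
  field_simp
  ring

lemma strictMonoOn_binEntropy_div_one_sub :
    StrictMonoOn (fun p => binEntropy p / (1 - p)) (Ioo 0 1) := by
  have hderiv : ∀ p ∈ Ioo (0 : ℝ) 1,
      HasDerivAt (fun p => binEntropy p / (1 - p)) (-log p / (1 - p) ^ 2) p :=
    fun p hp => hasDerivAt_binEntropy_div_one_sub hp.1.ne' hp.2.ne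
  refine strictMonoOn_of_deriv_pos (convex_Ioo 0 1)
    (fun p hp => (hderiv p hp).continuousAt.continuousWithinAt) fun p hp => ?_
  rw [interior_Ioo] at hp
  rw [(hderiv p hp).deriv]
  exact div_pos (neg_pos.2 (log_neg hp.1 hp.2)) (pow_pos (sub_pos.2 hp.2) 2)

end Real

section Crossover

variable {A c x y : ℝ}

lemma div_add_pow_mem_Ioo (hA : 0 < A) (hx : -c < x) {n : ℕ} (hn : n ≠ 0) :
    ((x + c) / (A + x + c)) ^ n ∈ Ioo 0 1 := by
  have hpos : 0 < (x + c) / (A + x + c) := div_pos (by linarith) (by linarith)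
  exact ⟨pow_pos hpos n, pow_lt_one₀ hpos.le ((div_lt_one (by linarith)).2 (by linarith)) hn⟩

lemma div_add_pow_lt (hA : 0 < A) (hx : -c < x) (hxy : x < y) {n : ℕ} (hn : n ≠ 0) :
    ((x + c) / (A + x + c)) ^ n < ((y + c) / (A + y + c)) ^ n := by
  refine pow_lt_pow_left₀ ?_ (div_pos (by linarith) (by linarith)).le hn
  rw [div_lt_div_iff₀ (by linarith) (by linarith)]
  nlinarith

end Crossover

/-- The Z-channel capacity `C(p) = H(1/(1+e^{g(p)})) − g(p)/(1+e^{g(p)})` is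
strictly decreasing in the crossover probability `p` on `(0,1)`; hence for the
crossover `p_c(x₂) = ((x₂+c)/(A₁+x₂+c))^{nN}` (increasing in the interference
level `x₂ ≥ 0`), the maximum individual rate over `x₂ ∈ {0, A₂}` is attained at
`x₂ = 0`. -/
theorem stmt_16 (A1 A2 c : ℝ) (nN : ℕ) (hA1 : 0 < A1) (hA2 : 0 < A2)
    (hc : 0 < c) (hn : 0 < nN) :
    let H : ℝ → ℝ := fun q => -q * Real.log q - (1 - q) * Real.log (1 - q)
    let g : ℝ → ℝ := fun p => H p / (1 - p)
    let C : ℝ → ℝ := fun p => H (1 / (1 + Real.exp (g p))) - g p / (1 + Real.exp (g p))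
    let pc : ℝ → ℝ := fun x2 => ((x2 + c) / (A1 + x2 + c)) ^ nN
    StrictAntiOn C (Set.Ioo 0 1) ∧ C (pc A2) < C (pc 0) := by
  intro H g C pc
  have hC : C = (fun x => log (1 + exp (-x))) ∘ fun p => binEntropy p / (1 - p) := by
    funext p
    simp only [C, g, H, Function.comp_apply, neg_mul_log_sub_one_sub_mul_log,
      binEntropy_one_div_one_add_exp_sub]
  have hC_anti : StrictAntiOn C (Ioo 0 1) := hC ▸
    strictAnti_log_one_add_exp_neg.comp_strictMonoOn strictMonoOn_binEntropy_div_one_sub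
  have h0 : -c < 0 := neg_lt_zero.2 hc
  exact ⟨hC_anti, hC_anti (div_add_pow_mem_Ioo hA1 h0 hn.ne')
    (div_add_pow_mem_Ioo hA1 (h0.trans hA2) hn.ne') (div_add_pow_lt hA1 h0 hA2 hn.ne')⟩
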